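/- arXiv:2103.09175 — 8 statements merged into one kernel-verified Lean document; each statement's English description precedes it below -/
import Mathlib

section
/- Recursion for the matrix Σ_{p,m}: for every integer m ≥ p+2, writing v ∈ ℝ^{m−1} for the vector with v_i = φ_i for 1 ≤ i ≤ p and v_i = 0 for p+1 ≤ i ≤ m−1, the matrix Σ_{p,m} has the block form: its (1,1) entry equals 1, its first row (excluding the (1,1) entry) equals −vᵀ, its first column (excluding the (1,1) entry) equals −v, and its lower-right (m−1)×(m−1) block equals Σ_{p,m−1} + v vᵀ. -/
open Matrix Finset

/-!
With `g = (γ₁, …, γₙ)`, the Toeplitz matrix `Γₙ₊₁` is `Γₙ` bordered by `γ₀` and `g`. Because `p ≤ n`,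
the Yule–Walker equations for lags `1, …, n` say exactly `Γₙ v = g`, and the one for lag `0` says
`γ₀ - gᵀ v = σ²`: the coefficient vector `v` is `Γₙ⁻¹ g` and `σ²` is the Schur complement of `Γₙ`
in `Γₙ₊₁`. The block-inverse formula for a bordered matrix then gives
`σ² Γₙ₊₁⁻¹ = [[1, -vᵀ], [-v, σ² Γₙ⁻¹ + v vᵀ]]`.
-/

lemma Function.Even.apply_abs {α β : Type*} [AddGroup α] [LinearOrder α] {f : α → β}
    (hf : f.Even) (x : α) : f |x| = f x := by
  rcases abs_choice x with h | h <;> simp [h, hf x]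

namespace Matrix

variable {K : Type*} {n : ℕ}

/-- The `(n + 1) × (n + 1)` matrix `[[a, rᵀ], [c, G]]`. -/
def border (a : K) (r c : Fin n → K) (G : Matrix (Fin n) (Fin n) K) :
    Matrix (Fin (n + 1)) (Fin (n + 1)) K :=
  of fun i j => Fin.cases (Fin.cases a r j) (fun i => Fin.cases (c i) (G i) j) i

section
variable (a : K) (r c : Fin n → K) (G : Matrix (Fin n) (Fin n) K)

@[simp] lemma border_zero_zero : border a r c G 0 0 = a := rfl
@[simp] lemma border_zero_succ (j : Fin n) : border a r c G 0 j.succ = r j := rfl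
@[simp] lemma border_succ_zero (i : Fin n) : border a r c G i.succ 0 = c i := rfl
@[simp] lemma border_succ_succ (i j : Fin n) : border a r c G i.succ j.succ = G i j := rfl

end

lemma border_mul_border [CommRing K] (a b : K) (r c r' c' : Fin n → K)
    (G H : Matrix (Fin n) (Fin n) K) :
    border a r c G * border b r' c' H =
      border (a * b + r ⬝ᵥ c') (a • r' + r ᵥ* H) (b • c + G *ᵥ c') (vecMulVec c r' + G * H) := by
  ext i j
  refine Fin.cases (Fin.cases ?_ (fun j => ?_) j) (fun i => Fin.cases ?_ (fun j => ?_) j) i <;>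
    simp [mul_apply, Fin.sum_univ_succ, dotProduct, vecMul, mulVec, vecMulVec_apply, mul_comm]

lemma border_smul_one [CommRing K] (s : K) :
    border s 0 0 (s • 1 : Matrix (Fin n) (Fin n) K) = s • 1 := by
  ext i j
  refine Fin.cases (Fin.cases ?_ (fun j => ?_) j) (fun i => Fin.cases ?_ (fun j => ?_) j) i <;>
    simp [one_apply, Fin.ext_iff]

/-- Inverse of a bordered matrix through the Schur complement `s = a - rᵀ G⁻¹ c`, with
`u = G⁻¹ c` and `wᵀ = rᵀ G⁻¹`. -/
lemma smul_inv_border [Field K] {a s : K} {r c u w : Fin n → K} {G : Matrix (Fin n) (Fin n) K}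
    (hs : s ≠ 0) (hG : IsUnit G.det) (hu : G *ᵥ u = c) (hw : w ᵥ* G = r) (ha : a = s + r ⬝ᵥ u) :
    s • (border a r c G)⁻¹ = border 1 (-w) (-u) (s • G⁻¹ + vecMulVec u w) := by
  have hrw : r ᵥ* G⁻¹ = w := by rw [← hw, vecMul_vecMul, mul_nonsing_inv G hG, vecMul_one]
  have hmul : border a r c G * border 1 (-w) (-u) (s • G⁻¹ + vecMulVec u w) = s • 1 := by
    rw [border_mul_border, ← border_smul_one]
    congr 1
    · simp [ha]
    · rw [vecMul_add, vecMul_smul, hrw, vecMul_vecMulVec, ha]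
      module
    · simp [mulVec_neg, hu]
    · rw [Matrix.mul_add, Matrix.mul_smul, mul_nonsing_inv G hG, mul_vecMulVec, hu,
        vecMulVec_neg]
      abel
  have hinv : (border a r c G)⁻¹ = s⁻¹ • border 1 (-w) (-u) (s • G⁻¹ + vecMulVec u w) :=
    inv_eq_right_inv <| by rw [Matrix.mul_smul, hmul, smul_smul, inv_mul_cancel₀ hs, one_smul]
  rw [hinv, smul_smul, mul_inv_cancel₀ hs, one_smul]

end Matrix

section AR

variable {R : Type*} {φ : ℕ → ℝ} {γ : ℤ → ℝ} {p n : ℕ}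

variable (φ p n) in
def arCoeffVec : Fin n → ℝ := fun k => if (k : ℕ) + 1 ≤ p then φ ((k : ℕ) + 1) else 0

variable (n) in
def autocovVec (f : ℤ → R) : Fin n → R := fun k => f ((k : ℤ) + 1)

lemma eq_border_autocovVec (f : ℤ → R) {A : Matrix (Fin (n + 1)) (Fin (n + 1)) R}
    {G : Matrix (Fin n) (Fin n) R} (hA : ∀ i j : Fin (n + 1), A i j = f |(i : ℤ) - j|)
    (hG : ∀ i j : Fin n, G i j = f |(i : ℤ) - j|) :
    A = border (f 0) (autocovVec n f) (autocovVec n f) G := by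
  ext i j
  refine Fin.cases (Fin.cases ?_ (fun j => ?_) j) (fun i => Fin.cases ?_ (fun j => ?_) j) i <;>
    simp [hA, hG, autocovVec] <;> grind

lemma sum_arCoeffVec_mul (hpn : p ≤ n) (f : ℕ → ℝ) :
    ∑ k : Fin n, arCoeffVec φ p n k * f ((k : ℕ) + 1) = ∑ i ∈ Icc 1 p, φ i * f i := by
  simp only [arCoeffVec, ite_mul, zero_mul]
  rw [Fin.sum_univ_eq_sum_range (fun k => if k + 1 ≤ p then φ (k + 1) * f (k + 1) else 0),
    ← sum_filter, ← Ico_add_one_right_eq_Icc, sum_Ico_eq_sum_range,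
    show (range n).filter (· + 1 ≤ p) = range p by ext; simp; omega]
  simp [add_comm]

lemma autocovVec_dotProduct_arCoeffVec (hpn : p ≤ n) :
    autocovVec n γ ⬝ᵥ arCoeffVec φ p n = ∑ i ∈ Icc 1 p, φ i * γ i := by
  rw [dotProduct_comm]
  exact_mod_cast sum_arCoeffVec_mul hpn fun i => γ i

/-- The Yule–Walker equations for lags `1, …, n`. -/
lemma mulVec_arCoeffVec_eq_autocovVec (heven : γ.Even)
    (hYW : ∀ j : ℤ, 1 ≤ j → γ j = ∑ i ∈ Icc 1 p, φ i * γ (j - i))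
    {G : Matrix (Fin n) (Fin n) ℝ} (hG : ∀ i j : Fin n, G i j = γ |(i : ℤ) - j|) (hpn : p ≤ n) :
    G *ᵥ arCoeffVec φ p n = autocovVec n γ := by
  ext k
  calc (G *ᵥ arCoeffVec φ p n) k
      = ∑ l : Fin n, arCoeffVec φ p n l * γ ((k + 1 : ℤ) - ((l : ℕ) + 1 : ℕ)) := by
        simp only [mulVec, dotProduct, hG, heven.apply_abs]
        refine sum_congr rfl fun l _ => ?_
        push_cast
        ring_nf
    _ = ∑ i ∈ Icc 1 p, φ i * γ ((k + 1 : ℤ) - i) :=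
        sum_arCoeffVec_mul hpn fun i => γ ((k + 1 : ℤ) - i)
    _ = autocovVec n γ k := (hYW _ (by omega)).symm

end AR

/-- Context: AR(p) coefficients `φ`, white-noise variance `σ2`, autocovariance
sequence `γ` satisfying the Yule–Walker equations, and the autocovariance
Toeplitz matrices `Γ m`, assumed positive definite for `m ≥ 1`. -/
theorem stmt_2
    (p : ℕ)
    (φ : ℕ → ℝ)
    (σ2 : ℝ) (hσ : 0 < σ2)
    (γ : ℤ → ℝ)
    (hsym : ∀ j : ℤ, γ (-j) = γ j)
    (hYW0 : γ 0 = (∑ i ∈ Finset.Icc 1 p, φ i * γ (i : ℤ)) + σ2)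
    (hYW : ∀ j : ℤ, 1 ≤ j → γ j = ∑ i ∈ Finset.Icc 1 p, φ i * γ (j - (i : ℤ)))
    (Γ : (m : ℕ) → Matrix (Fin m) (Fin m) ℝ)
    (hΓ : ∀ m : ℕ, ∀ i j : Fin m, Γ m i j = γ |(i : ℤ) - (j : ℤ)|)
    (hpd : ∀ m : ℕ, 1 ≤ m → (Γ m).PosDef)
    (m : ℕ) (hm : p + 2 ≤ m) :
    let S : Matrix (Fin m) (Fin m) ℝ := σ2 • (Γ m)⁻¹
    let S2 : Matrix (Fin (m - 1)) (Fin (m - 1)) ℝ := σ2 • (Γ (m - 1))⁻¹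
    let v : Fin (m - 1) → ℝ := fun k => if (k : ℕ) + 1 ≤ p then φ ((k : ℕ) + 1) else 0
    let e : Fin (m - 1) → Fin m := fun k => ⟨(k : ℕ) + 1, by have := k.isLt; omega⟩
    S ⟨0, by omega⟩ ⟨0, by omega⟩ = 1 ∧
    (∀ j : Fin (m - 1), S ⟨0, by omega⟩ (e j) = -(v j)) ∧
    (∀ i : Fin (m - 1), S (e i) ⟨0, by omega⟩ = -(v i)) ∧
    (∀ i j : Fin (m - 1), S (e i) (e j) = S2 i j + v i * v j) := by
  intro S S2 v e
  obtain ⟨n, rfl⟩ : ∃ n, m = n + 1 := ⟨m - 1, by omega⟩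
  have hpn : p ≤ n := by omega
  have hΓv : Γ n *ᵥ arCoeffVec φ p n = autocovVec n γ :=
    mulVec_arCoeffVec_eq_autocovVec hsym hYW (hΓ n) hpn
  have hvΓ : arCoeffVec φ p n ᵥ* Γ n = autocovVec n γ := by
    have hΓsymm : (Γ n)ᵀ = Γ n := by
      ext i j
      simp [hΓ, abs_sub_comm]
    rw [← hΓv, ← vecMul_transpose, hΓsymm]
  have hγ0 : γ 0 = σ2 + autocovVec n γ ⬝ᵥ arCoeffVec φ p n := by
    rw [autocovVec_dotProduct_arCoeffVec hpn, hYW0, add_comm]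
  have hS : S = border 1 (-v) (-v) (S2 + vecMulVec v v) := by
    show σ2 • (Γ (n + 1))⁻¹ = _
    rw [eq_border_autocovVec γ (hΓ _) (hΓ n)]
    exact smul_inv_border hσ.ne' (hpd n (by omega)).det_pos.ne'.isUnit hΓv hvΓ hγ0
  rw [hS]
  -- after the substitution `m - 1` is `n` definitionally, and `e k` is `k.succ`
  exact ⟨rfl, fun _ => rfl, fun _ => rfl, fun _ _ => rfl⟩
end

section
/- Iterated determinant formula: for every integer m ≥ p, det(Γ_m) = σ^{2(m−p)} · det(Γ_p). -/
/-!
Subtracting from the last row of the Toeplitz matrix `Γₙ₊₁ = (γ (i - j))` the combination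
`∑ φᵢ · (row n - i)` of the `p ≤ n` rows above it does not change the determinant, and by the
Yule–Walker equations (with `γ` even) it turns that row into `(0, …, 0, σ²)`. Expanding along it
gives `det Γₙ₊₁ = σ² det Γₙ` for every `n ≥ p`.
-/

open Matrix Finset

namespace Matrix

def toeplitz {α : Type*} (γ : ℤ → α) (n : ℕ) : Matrix (Fin n) (Fin n) α :=
  of fun i j => γ ((i : ℤ) - j)

variable {R : Type*} [CommRing R]

theorem det_updateRow_add_sum_smul {n ι : Type*} [Fintype n] [DecidableEq n]
    (M : Matrix n n R) (j : n) (s : Finset ι) (f : ι → n) (hf : ∀ k ∈ s, f k ≠ j) (c : ι → R) :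
    (M.updateRow j (M j + ∑ k ∈ s, c k • M (f k))).det = M.det := by
  classical
  induction s using Finset.induction_on with
  | empty => simp
  | insert k t hk ih =>
    rw [sum_insert hk, add_comm (c k • M (f k)), ← add_assoc, det_updateRow_add,
      det_updateRow_smul, det_updateRow_eq_zero (hf k (mem_insert_self k t)), mul_zero, add_zero]
    exact ih fun i hi => hf i (mem_insert_of_mem hi)

theorem det_succ_of_row_last_eq_single {n : ℕ} (A : Matrix (Fin (n + 1)) (Fin (n + 1)) R) (c : R)
    (hA : A (Fin.last n) = Pi.single (Fin.last n) c) :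
    A.det = c * (A.submatrix Fin.castSucc Fin.castSucc).det := by
  rw [det_succ_row A (Fin.last n), Fintype.sum_eq_single (Fin.last n) fun j hj => by
    simp [hA, Pi.single_eq_of_ne hj]]
  simp [hA, Fin.succAbove_last, ← two_mul, pow_mul]

theorem det_toeplitz_succ {γ : ℤ → R} {φ : ℕ → R} {σ2 : R} {p n : ℕ} (hn : p ≤ n)
    (hres : ∀ k : ℕ, γ k - ∑ i ∈ Icc 1 p, φ i * γ ((k : ℤ) - i) = if k = 0 then σ2 else 0) :
    (toeplitz γ (n + 1)).det = σ2 * (toeplitz γ n).det := by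
  set A := toeplitz γ (n + 1)
  let f : ℕ → Fin (n + 1) := fun i => ⟨n - i, by omega⟩
  have hf : ∀ i ∈ Icc 1 p, f i ≠ Fin.last n := by
    intro i hi
    simp only [mem_Icc] at hi
    simp only [f, ne_eq, Fin.ext_iff, Fin.val_last]
    omega
  set B := A.updateRow (Fin.last n) (A (Fin.last n) + ∑ i ∈ Icc 1 p, (-φ i) • A (f i))
  have hB : B (Fin.last n) = Pi.single (Fin.last n) σ2 := by
    ext j
    obtain ⟨k, hk⟩ : ∃ k : ℕ, (j : ℕ) + k = n := ⟨n - j, by omega⟩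
    have hlast : j = Fin.last n ↔ k = 0 := by simp only [Fin.ext_iff, Fin.val_last]; omega
    simp only [Pi.single_apply, hlast]
    rw [← hres k, sub_eq_add_neg, ← sum_neg_distrib]
    simp only [B, A, toeplitz, f, updateRow_self, Pi.add_apply, Finset.sum_apply, Pi.smul_apply,
      of_apply, smul_eq_mul, Fin.val_last, neg_mul]
    congr 1
    · congr 1; omega
    · refine sum_congr rfl fun i hi => ?_
      rw [mem_Icc] at hi
      congr 3
      omega
  have hBsub : B.submatrix Fin.castSucc Fin.castSucc = toeplitz γ n := by
    ext i j
    simp [B, A, toeplitz]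
  rw [← det_updateRow_add_sum_smul A (Fin.last n) (Icc 1 p) f hf,
    det_succ_of_row_last_eq_single B σ2 hB, hBsub]

theorem det_toeplitz_eq_pow_mul {γ : ℤ → R} {φ : ℕ → R} {σ2 : R} {p m : ℕ} (hm : p ≤ m)
    (hres : ∀ k : ℕ, γ k - ∑ i ∈ Icc 1 p, φ i * γ ((k : ℤ) - i) = if k = 0 then σ2 else 0) :
    (toeplitz γ m).det = σ2 ^ (m - p) * (toeplitz γ p).det := by
  induction m, hm using Nat.le_induction with
  | base => simp
  | succ n hn ih =>
    rw [det_toeplitz_succ hn hres, ih, show n + 1 - p = n - p + 1 by omega, pow_succ]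
    ring

end Matrix

theorem yuleWalker_residual {R : Type*} [CommRing R] {γ : ℤ → R} {φ : ℕ → R} {σ2 : R} {p : ℕ}
    (hsym : ∀ j : ℤ, γ (-j) = γ j)
    (hYW0 : γ 0 = (∑ i ∈ Icc 1 p, φ i * γ (i : ℤ)) + σ2)
    (hYW : ∀ j : ℤ, 1 ≤ j → γ j = ∑ i ∈ Icc 1 p, φ i * γ (j - (i : ℤ))) (k : ℕ) :
    γ k - ∑ i ∈ Icc 1 p, φ i * γ ((k : ℤ) - i) = if k = 0 then σ2 else 0 := by
  rcases Nat.eq_zero_or_pos k with rfl | hk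
  · simp [hsym, hYW0]
  · rw [if_neg hk.ne', hYW k (by omega), sub_self]

theorem stmt_4_general
    (p : ℕ)
    (φ : ℕ → ℝ)
    (σ2 : ℝ)
    (γ : ℤ → ℝ)
    (hsym : ∀ j : ℤ, γ (-j) = γ j)
    (hYW0 : γ 0 = (∑ i ∈ Finset.Icc 1 p, φ i * γ (i : ℤ)) + σ2)
    (hYW : ∀ j : ℤ, 1 ≤ j → γ j = ∑ i ∈ Finset.Icc 1 p, φ i * γ (j - (i : ℤ)))
    (Γ : (m : ℕ) → Matrix (Fin m) (Fin m) ℝ)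
    (hΓ : ∀ m : ℕ, ∀ i j : Fin m, Γ m i j = γ |(i : ℤ) - (j : ℤ)|)
    (m : ℕ) (hm : p ≤ m) :
    (Γ m).det = σ2 ^ (m - p) * (Γ p).det := by
  have hΓ_eq : ∀ n, Γ n = toeplitz γ n := fun n => by
    ext i j
    exact (hΓ n i j).trans (abs_by_cases (fun x => γ x = γ (i - j)) rfl (hsym _))
  rw [hΓ_eq, hΓ_eq]
  exact det_toeplitz_eq_pow_mul hm (yuleWalker_residual hsym hYW0 hYW)

/-- Context: AR(p) coefficients `φ`, white-noise variance `σ2`, autocovariance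
sequence `γ` satisfying the Yule–Walker equations, and the autocovariance
Toeplitz matrices `Γ m`, assumed positive definite for `m ≥ 1`. -/
theorem stmt_4
    (p : ℕ) (hp : 1 ≤ p)
    (φ : ℕ → ℝ)
    (σ2 : ℝ) (hσ : 0 < σ2)
    (γ : ℤ → ℝ)
    (hsym : ∀ j : ℤ, γ (-j) = γ j)
    (hYW0 : γ 0 = (∑ i ∈ Finset.Icc 1 p, φ i * γ (i : ℤ)) + σ2)
    (hYW : ∀ j : ℤ, 1 ≤ j → γ j = ∑ i ∈ Finset.Icc 1 p, φ i * γ (j - (i : ℤ)))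
    (Γ : (m : ℕ) → Matrix (Fin m) (Fin m) ℝ)
    (hΓ : ∀ m : ℕ, ∀ i j : Fin m, Γ m i j = γ |(i : ℤ) - (j : ℤ)|)
    (hpd : ∀ m : ℕ, 1 ≤ m → (Γ m).PosDef)
    (m : ℕ) (hm : p ≤ m) :
    (Γ m).det = σ2 ^ (m - p) * (Γ p).det :=
  stmt_4_general p φ σ2 γ hsym hYW0 hYW Γ hΓ m hm
end

section
/- Nesting of the lower right corner: for every integer m ≥ p+2 and all indices 2 ≤ j ≤ i ≤ m−p, NLRC_{p,m}(i,j) = NLRC_{p,m−1}(i−1, j−1); that is, deleting the first row and first column of NLRC_{p,m} yields NLRC_{p,m−1}. -/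
/-!
Deleting the first row and column of the Toeplitz matrix `Γₘ` leaves `Γₘ₋₁`, and by the
Yule–Walker equations the rest of the first column of `Γₘ` is `Γₘ₋₁ v` with
`v = (φ₁, …, φ_p, 0, …, 0)`. For such a bordered matrix, `Γₘ₋₁⁻¹` is the lower right block of
`Γₘ⁻¹` plus the rank-one term `v ⊗ (first row of Γₘ⁻¹)`, and the rows of this term with index
at least `p` vanish.
-/

open Matrix Finset

namespace Matrix

variable {R : Type*} [CommRing R] {n : ℕ}

theorem inv_submatrix_succ_succ_eq (A : Matrix (Fin (n + 1)) (Fin (n + 1)) R) (hA : IsUnit A.det)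
    (v : Fin n → R) (hv : A.submatrix Fin.succ Fin.succ *ᵥ v = fun c => A c.succ 0) :
    (A.submatrix Fin.succ Fin.succ)⁻¹
      = A⁻¹.submatrix Fin.succ Fin.succ + vecMulVec v (fun b => A⁻¹ 0 b.succ) := by
  refine inv_eq_right_inv ?_
  ext c b
  have hrow := congr_fun₂ (mul_nonsing_inv A hA) c.succ b.succ
  rw [mul_apply, Fin.sum_univ_succ, ← congr_fun hv c] at hrow
  simp only [one_apply, Fin.succ_inj] at hrow
  rw [one_apply, ← hrow]
  simp only [mul_add, mulVec, dotProduct, vecMulVec_apply, mul_apply, submatrix_apply, add_apply,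
    sum_add_distrib, ← mul_assoc, ← sum_mul]
  ring

end Matrix

section Toeplitz

variable {R : Type*}

def symmToeplitz (γ : ℤ → R) (n : ℕ) : Matrix (Fin n) (Fin n) R :=
  Matrix.of fun i j => γ |(i : ℤ) - j|

variable (γ : ℤ → R) {n : ℕ}

theorem symmToeplitz_submatrix_succ_succ :
    (symmToeplitz γ (n + 1)).submatrix Fin.succ Fin.succ = symmToeplitz γ n := by
  ext i j
  simp [symmToeplitz]

theorem symmToeplitz_succ_zero (c : Fin n) : symmToeplitz γ (n + 1) c.succ 0 = γ (c + 1) := by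
  simp [symmToeplitz, abs_of_nonneg (by positivity : (0 : ℤ) ≤ c + 1)]

variable [CommRing R]

def arCoeffs (φ : ℕ → R) (p n : ℕ) : Fin n → R :=
  fun k => if (k : ℕ) < p then φ (k + 1) else 0

theorem symmToeplitz_mulVec_arCoeffs (φ : ℕ → R) {p : ℕ} (hpn : p ≤ n)
    (hsym : ∀ j : ℤ, γ (-j) = γ j)
    (hYW : ∀ j : ℤ, 1 ≤ j → γ j = ∑ i ∈ Finset.Icc 1 p, φ i * γ (j - (i : ℤ))) :
    symmToeplitz γ n *ᵥ arCoeffs φ p n = fun c : Fin n => γ (c + 1) := by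
  ext c
  have habs : ∀ x : ℤ, γ |x| = γ x := fun x => by
    rcases abs_choice x with h | h <;> simp [h, hsym]
  rw [hYW _ (by omega), mulVec, dotProduct]
  simp only [symmToeplitz, arCoeffs, of_apply, habs]
  rw [Fin.sum_univ_eq_sum_range (fun k => γ (c - k) * if k < p then φ (k + 1) else 0),
    ← Ico_add_one_right_eq_Icc, sum_Ico_eq_sum_range, Nat.add_sub_cancel,
    ← sum_subset (range_subset_range.mpr hpn)]
  · refine sum_congr rfl fun k hk => ?_
    rw [if_pos (mem_range.mp hk), mul_comm, add_comm 1 k]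
    push_cast; ring_nf
  · intro k _ hk
    rw [if_neg (mt mem_range.mpr hk), mul_zero]

end Toeplitz

/-- Context: AR(p) coefficients `φ`, white-noise variance `σ2`, autocovariance
sequence `γ` satisfying the Yule–Walker equations, and the autocovariance
Toeplitz matrices `Γ m`, assumed positive definite for `m ≥ 1`. -/
theorem stmt_6
    (p : ℕ)
    (φ : ℕ → ℝ)
    (σ2 : ℝ)
    (γ : ℤ → ℝ)
    (hsym : ∀ j : ℤ, γ (-j) = γ j)
    (hYW : ∀ j : ℤ, 1 ≤ j → γ j = ∑ i ∈ Finset.Icc 1 p, φ i * γ (j - (i : ℤ)))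
    (Γ : (m : ℕ) → Matrix (Fin m) (Fin m) ℝ)
    (hΓ : ∀ m : ℕ, ∀ i j : Fin m, Γ m i j = γ |(i : ℤ) - (j : ℤ)|)
    (hpd : ∀ m : ℕ, 1 ≤ m → (Γ m).PosDef)
    (m : ℕ) (hm : p + 2 ≤ m) (i j : ℕ) (hj : 2 ≤ j) (hji : j ≤ i) (hi : i ≤ m - p) :
    σ2 * (Γ m)⁻¹ ⟨p + i - 1, by omega⟩ ⟨p + j - 1, by omega⟩
      = σ2 * (Γ (m - 1))⁻¹ ⟨p + i - 2, by omega⟩ ⟨p + j - 2, by omega⟩ := by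
  obtain rfl : Γ = symmToeplitz γ := funext fun m => ext (hΓ m)
  obtain ⟨n, rfl⟩ : ∃ n, m = n + 1 := ⟨m - 1, by omega⟩
  have hv : (symmToeplitz γ (n + 1)).submatrix Fin.succ Fin.succ *ᵥ arCoeffs φ p n
      = fun c => symmToeplitz γ (n + 1) c.succ 0 := by
    rw [symmToeplitz_submatrix_succ_succ, symmToeplitz_mulVec_arCoeffs γ φ (by omega) hsym hYW]
    simp only [symmToeplitz_succ_zero]
  have hinv := inv_submatrix_succ_succ_eq _ (hpd (n + 1) le_add_self).det_pos.ne'.isUnit _ hv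
  rw [symmToeplitz_submatrix_succ_succ] at hinv
  have hentry : (symmToeplitz γ n)⁻¹ ⟨p + i - 2, by omega⟩ ⟨p + j - 2, by omega⟩
      = (symmToeplitz γ (n + 1))⁻¹ ⟨p + i - 1, by omega⟩ ⟨p + j - 1, by omega⟩ := by
    rw [hinv, Matrix.add_apply, vecMulVec_apply, arCoeffs, if_neg (by simp; omega), zero_mul,
      add_zero, submatrix_apply]
    exact congr_arg₂ _ (Fin.ext (by simp; omega)) (Fin.ext (by simp; omega))
  exact congrArg (σ2 * ·) hentry.symm
end

section
/- Last entry of the first column of NLRC in the overlapping regime: for every integer m with p+2 ≤ m ≤ 2p+1, NLRC_{p,m}(m−p, 1) = φ₀ · φ_{m−p−1} = −φ_{m−p−1}, where φ₀ := −1. -/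
/-!
For `m ≥ p + 1` the last column of `σ² Γ_m⁻¹` is explicit: the vector `w` with
`w_s = φ₀ φ_{m-s}` for `m - p ≤ s ≤ m` and `w_s = 0` otherwise satisfies `Γ_m w = σ² e_m`,
because `(Γ_m w)_i = Cov(ε_{t+m-i}, X_t)`, which the Yule–Walker equations evaluate to `0` for
`i < m` and to `σ²` for `i = m`. As `Γ_m⁻¹` is symmetric, the wanted entry is
`w_{p+1} = φ₀ φ_{m-p-1}`, and `p + 1` lies in the support of `w` exactly when `m ≤ 2p + 1`.
-/

open Matrix Finset

variable {R : Type*}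

def autocovMatrix (γ : ℤ → R) (m : ℕ) : Matrix (Fin m) (Fin m) R :=
  Matrix.of fun i j => γ |(i : ℤ) - j|

lemma autocovMatrix_transpose (γ : ℤ → R) (m : ℕ) : (autocovMatrix γ m)ᵀ = autocovMatrix γ m := by
  ext i j
  simp only [autocovMatrix, transpose_apply, of_apply, abs_sub_comm]

variable [CommRing R]

/-- With `φ 0 = -1` this is `Cov(ε_{t+e}, X_t)` for the innovations
`ε_t = X_t - ∑_{k=1}^p φ_k X_{t-k}`. -/
def innovationCov (p : ℕ) (φ : ℕ → R) (γ : ℤ → R) (e : ℤ) : R :=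
  -∑ k ∈ Icc 0 p, φ k * γ (e - k)

def arLastColumn (p m : ℕ) (φ : ℕ → R) (s : Fin m) : R :=
  if m - 1 - s ≤ p then -φ (m - 1 - s) else 0

variable {p m : ℕ} {φ : ℕ → R} {γ : ℤ → R}

lemma innovationCov_eq (hφ0 : φ 0 = -1) (e : ℤ) :
    innovationCov p φ γ e = γ e - ∑ k ∈ Icc 1 p, φ k * γ (e - k) := by
  rw [innovationCov, ← insert_Icc_add_one_left_eq_Icc (Nat.zero_le p),
    sum_insert (by simp), hφ0, Nat.cast_zero, sub_zero, zero_add]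
  ring

lemma innovationCov_of_pos (hφ0 : φ 0 = -1)
    (hYW : ∀ j : ℤ, 1 ≤ j → γ j = ∑ i ∈ Icc 1 p, φ i * γ (j - i)) {e : ℤ} (he : 0 < e) :
    innovationCov p φ γ e = 0 := by
  rw [innovationCov_eq hφ0, ← hYW e he, sub_self]

lemma innovationCov_zero {σ2 : R} (hφ0 : φ 0 = -1) (hsym : γ.Even)
    (hYW0 : γ 0 = (∑ i ∈ Icc 1 p, φ i * γ i) + σ2) :
    innovationCov p φ γ 0 = σ2 := by
  simp only [innovationCov_eq hφ0, zero_sub, hsym.eq]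
  rw [hYW0, add_sub_cancel_left]

lemma autocovMatrix_mulVec_arLastColumn_eq_innovationCov (hsym : γ.Even) (hpm : p < m) :
    autocovMatrix γ m *ᵥ arLastColumn p m φ =
      fun i : Fin m => innovationCov p φ γ ((m : ℤ) - 1 - (i : ℕ)) := by
  ext i
  let f : ℕ → R := fun s => γ |(i : ℤ) - s| * if m - 1 - s ≤ p then -φ (m - 1 - s) else 0
  calc (autocovMatrix γ m *ᵥ arLastColumn p m φ) i
      = ∑ s ∈ range m, f s := Fin.sum_univ_eq_sum_range f m
    _ = ∑ t ∈ range m, f (m - 1 - t) := (sum_range_reflect f m).symm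
    _ = ∑ t ∈ range m, if t ≤ p then -(φ t * γ ((m : ℤ) - 1 - i - t)) else 0 := by
        refine sum_congr rfl fun t ht => ?_
        have ht : t < m := mem_range.mp ht
        have hflip : |(i : ℤ) - (m - 1 - t : ℕ)| = |(m : ℤ) - 1 - i - t| := by
          rw [abs_sub_comm]; congr 1; omega
        simp only [f, Nat.sub_sub_self (Nat.le_sub_one_of_lt ht)]
        rw [hflip, hsym.apply_abs]
        split_ifs <;> ring
    _ = innovationCov p φ γ ((m : ℤ) - 1 - i) := by
        rw [← sum_filter, innovationCov, ← sum_neg_distrib]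
        congr 1
        ext t; simp only [mem_filter, mem_range, mem_Icc]; omega

lemma Matrix.inv_apply_mul_of_mulVec_eq_single {n K : Type*} [Fintype n] [DecidableEq n]
    [CommRing K] {A : Matrix n n K} (hA : IsUnit A.det) {w : n → K} {j : n} {c : K}
    (h : A *ᵥ w = Pi.single j c) (i : n) : A⁻¹ i j * c = w i := by
  have := congrFun (congrArg (A⁻¹ *ᵥ ·) h) i
  simp only [mulVec_mulVec, nonsing_inv_mul _ hA, one_mulVec, mulVec_single] at this
  simpa using this.symm

lemma autocovMatrix_mulVec_arLastColumn {σ2 : R} (hφ0 : φ 0 = -1) (hsym : γ.Even)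
    (hYW0 : γ 0 = (∑ i ∈ Icc 1 p, φ i * γ i) + σ2)
    (hYW : ∀ j : ℤ, 1 ≤ j → γ j = ∑ i ∈ Icc 1 p, φ i * γ (j - i)) (hpm : p < m) :
    autocovMatrix γ m *ᵥ arLastColumn p m φ = Pi.single ⟨m - 1, by omega⟩ σ2 := by
  rw [autocovMatrix_mulVec_arLastColumn_eq_innovationCov hsym hpm]
  ext i
  rcases eq_or_ne i ⟨m - 1, by omega⟩ with rfl | hi
  · rw [Pi.single_eq_same, ← innovationCov_zero hφ0 hsym hYW0]
    congr 1
    simp only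
    omega
  · rw [Pi.single_eq_of_ne hi, innovationCov_of_pos hφ0 hYW]
    have : (i : ℕ) ≠ m - 1 := fun h => hi (Fin.ext h)
    omega

/-- Context: AR(p) coefficients `φ`, white-noise variance `σ2`, autocovariance
sequence `γ` satisfying the Yule–Walker equations, and the autocovariance
Toeplitz matrices `Γ m`, assumed positive definite for `m ≥ 1`. -/
theorem stmt_8
    (p : ℕ)
    (φ : ℕ → ℝ) (hφ0 : φ 0 = -1)
    (σ2 : ℝ)
    (γ : ℤ → ℝ)
    (hsym : ∀ j : ℤ, γ (-j) = γ j)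
    (hYW0 : γ 0 = (∑ i ∈ Finset.Icc 1 p, φ i * γ (i : ℤ)) + σ2)
    (hYW : ∀ j : ℤ, 1 ≤ j → γ j = ∑ i ∈ Finset.Icc 1 p, φ i * γ (j - (i : ℤ)))
    (Γ : (m : ℕ) → Matrix (Fin m) (Fin m) ℝ)
    (hΓ : ∀ m : ℕ, ∀ i j : Fin m, Γ m i j = γ |(i : ℤ) - (j : ℤ)|)
    (hpd : ∀ m : ℕ, 1 ≤ m → (Γ m).PosDef)
    (m : ℕ) (hm1 : p + 2 ≤ m) (hm2 : m ≤ 2 * p + 1) :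
    σ2 * (Γ m)⁻¹ ⟨m - 1, by omega⟩ ⟨p, by omega⟩ = φ 0 * φ (m - p - 1) := by
  have hΓm : Γ m = autocovMatrix γ m := Matrix.ext (hΓ m)
  have hdet : IsUnit (autocovMatrix γ m).det :=
    hΓm ▸ (isUnit_iff_isUnit_det _).mp (hpd m (by omega)).isUnit
  have hcol := Matrix.inv_apply_mul_of_mulVec_eq_single hdet
    (autocovMatrix_mulVec_arLastColumn hφ0 hsym hYW0 hYW (by omega)) ⟨p, by omega⟩
  rw [hΓm, ← transpose_apply (autocovMatrix γ m)⁻¹, transpose_nonsing_inv,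
    autocovMatrix_transpose, mul_comm, hcol, arLastColumn, if_pos (by simp only; omega), hφ0, Nat.sub_right_comm]
  ring
end

section
/- First-column stabilization of NLRC in the non-overlapping regime: for every integer m ≥ 2p+2 and every index 1 ≤ i ≤ m−p−1, NLRC_{p,m}(i,1) = NLRC_{p,m−1}(i,1), and moreover NLRC_{p,m}(m−p, 1) = 0. -/
/-!
Write `a₀ = 1`, `aⱼ = -φⱼ` for the coefficients of the AR polynomial. The Yule–Walker equations
say exactly that `∑ⱼ aⱼ γ(d - j)` is `σ²` for `d = 0` and `0` for `d ≥ 1`; applying the filter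
twice and using `γ(-j) = γ(j)`, the double sum `∑ᵢ ∑ⱼ aᵢ aⱼ γ(n - i + j)` is `σ² δₙ` for every
`n ∈ ℤ`. Hence the vector `vₖ = ∑ᵢ aᵢ a_{i+p-k}`, supported on `0 ≤ k ≤ 2p`, satisfies
`Γ_m v = σ² e_p` as soon as `m ≥ 2p + 1`: column `p` of `σ² Γ_m⁻¹` is `v`, whatever `m` is, and it
vanishes below row `2p`. Both claims follow because `m - 1 ≥ 2p + 1`.
-/

open Matrix Finset

noncomputable def arPolyCoeff (p : ℕ) (φ : ℕ → ℝ) (j : ℤ) : ℝ :=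
  if j = 0 then 1 else if 1 ≤ j ∧ j ≤ p then -φ j.toNat else 0

noncomputable def arInvColumn (p : ℕ) (φ : ℕ → ℝ) (k : ℤ) : ℝ :=
  ∑ i ∈ range (p + 1), arPolyCoeff p φ i * arPolyCoeff p φ (i + p - k)

/-- The autocovariance at lag `n` of the filtered sequence `∑ᵢ aᵢ X_{t-i}`. -/
noncomputable def whitenedAutocov (p : ℕ) (φ : ℕ → ℝ) (γ : ℤ → ℝ) (n : ℤ) : ℝ :=
  ∑ i ∈ range (p + 1), ∑ j ∈ range (p + 1),
    arPolyCoeff p φ i * arPolyCoeff p φ j * γ (n - i + j)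

structure IsYuleWalker (p : ℕ) (φ : ℕ → ℝ) (σ2 : ℝ) (γ : ℤ → ℝ) : Prop where
  symm : ∀ j : ℤ, γ (-j) = γ j
  lag_zero : γ 0 = (∑ i ∈ Icc 1 p, φ i * γ i) + σ2
  lag_pos : ∀ j : ℤ, 1 ≤ j → γ j = ∑ i ∈ Icc 1 p, φ i * γ (j - i)

section Filter

variable {p : ℕ} {φ : ℕ → ℝ}

lemma arPolyCoeff_zero : arPolyCoeff p φ 0 = 1 := if_pos rfl

lemma arPolyCoeff_of_neg {j : ℤ} (hj : j < 0) : arPolyCoeff p φ j = 0 := by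
  simp only [arPolyCoeff]; split_ifs <;> first | rfl | omega

lemma arPolyCoeff_of_lt {j : ℤ} (hj : p < j) : arPolyCoeff p φ j = 0 := by
  simp only [arPolyCoeff]; split_ifs <;> first | rfl | omega

lemma arPolyCoeff_natCast {i : ℕ} (hi : i ∈ Icc 1 p) : arPolyCoeff p φ i = -φ i := by
  rw [mem_Icc] at hi
  simp only [arPolyCoeff]; split_ifs <;> first | rfl | omega

lemma sum_arPolyCoeff_mul (f : ℤ → ℝ) :
    ∑ j ∈ range (p + 1), arPolyCoeff p φ j * f j = f 0 - ∑ i ∈ Icc 1 p, φ i * f i := by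
  rw [Nat.range_succ_eq_Icc_zero, ← insert_Icc_add_one_left_eq_Icc p.zero_le,
    sum_insert (by simp), Nat.cast_zero, arPolyCoeff_zero, one_mul, zero_add, sub_eq_add_neg,
    ← sum_neg_distrib]
  exact congrArg _ (sum_congr rfl fun i hi => by rw [arPolyCoeff_natCast hi, neg_mul])

lemma sum_fin_arPolyCoeff_sub_mul {m n : ℕ} (hpn : p ≤ n) (hnm : n < m) (g : ℤ → ℝ) :
    ∑ k : Fin m, arPolyCoeff p φ (n - k) * g k =
      ∑ j ∈ range (p + 1), arPolyCoeff p φ j * g (n - j) := by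
  rw [Fin.sum_univ_eq_sum_range (fun k => arPolyCoeff p φ (n - k) * g k)]
  have hsub : Icc (n - p) n ⊆ range m := fun k hk => by
    rw [mem_Icc] at hk; rw [mem_range]; omega
  rw [← sum_subset hsub fun k _ hk => ?outside]
  case outside =>
    rw [mem_Icc, not_and_or, not_le, not_le] at hk
    rcases hk with hk | hk
    · rw [arPolyCoeff_of_lt (by omega), zero_mul]
    · rw [arPolyCoeff_of_neg (by omega), zero_mul]
  refine sum_nbij' (n - ·) (n - ·) (fun k hk => ?_) (fun j hj => ?_) (fun k hk => ?_)
    (fun j hj => ?_) (fun k hk => ?_)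
  all_goals simp only [mem_Icc, mem_range] at *
  all_goals try omega
  rw [Nat.cast_sub hk.2, sub_sub_cancel]

lemma arInvColumn_of_lt {k : ℤ} (hk : 2 * p < k) : arInvColumn p φ k = 0 :=
  sum_eq_zero fun i hi =>
    mul_eq_zero_of_right _ (arPolyCoeff_of_neg (by rw [mem_range] at hi; omega))

lemma whitenedAutocov_neg {γ : ℤ → ℝ} (hsym : ∀ j : ℤ, γ (-j) = γ j) (n : ℤ) :
    whitenedAutocov p φ γ (-n) = whitenedAutocov p φ γ n := by
  rw [whitenedAutocov, whitenedAutocov, sum_comm]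
  refine sum_congr rfl fun i _ => sum_congr rfl fun j _ => ?_
  rw [mul_comm (arPolyCoeff p φ j), ← hsym]
  ring_nf

end Filter

namespace IsYuleWalker

variable {p : ℕ} {φ : ℕ → ℝ} {σ2 : ℝ} {γ : ℤ → ℝ}

lemma sum_arPolyCoeff_mul_sub_eq_zero (hγ : IsYuleWalker p φ σ2 γ) {d : ℤ} (hd : 1 ≤ d) :
    ∑ j ∈ range (p + 1), arPolyCoeff p φ j * γ (d - j) = 0 := by
  rw [sum_arPolyCoeff_mul (fun j => γ (d - j)), sub_zero, hγ.lag_pos d hd, sub_self]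

lemma sum_arPolyCoeff_mul_neg (hγ : IsYuleWalker p φ σ2 γ) :
    ∑ j ∈ range (p + 1), arPolyCoeff p φ j * γ (-j) = σ2 := by
  rw [sum_arPolyCoeff_mul (fun j => γ (-j)), neg_zero, hγ.lag_zero]
  simp only [hγ.symm, add_sub_cancel_left]

lemma whitenedAutocov_of_nonneg (hγ : IsYuleWalker p φ σ2 γ) {n : ℤ} (hn : 0 ≤ n) :
    whitenedAutocov p φ γ n = if n = 0 then σ2 else 0 := by
  have hinner : ∀ j : ℕ, ∑ i ∈ range (p + 1), arPolyCoeff p φ i * γ (n + j - i) =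
      if n + j = 0 then σ2 else 0 := by
    intro j
    split_ifs with h
    · simpa [h, zero_sub] using hγ.sum_arPolyCoeff_mul_neg
    · exact hγ.sum_arPolyCoeff_mul_sub_eq_zero (by omega)
  calc whitenedAutocov p φ γ n
      = ∑ j ∈ range (p + 1), arPolyCoeff p φ j *
          ∑ i ∈ range (p + 1), arPolyCoeff p φ i * γ (n + j - i) := by
        rw [whitenedAutocov, sum_comm]
        refine sum_congr rfl fun j _ => ?_
        rw [mul_sum]
        refine sum_congr rfl fun i _ => ?_
        ring_nf
    _ = if n = 0 then σ2 else 0 := by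
        simp only [hinner]
        rw [sum_range_succ', sum_eq_zero fun j _ => by rw [if_neg (by omega), mul_zero]]
        simp [arPolyCoeff_zero]

theorem whitenedAutocov_eq (hγ : IsYuleWalker p φ σ2 γ) (n : ℤ) :
    whitenedAutocov p φ γ n = if n = 0 then σ2 else 0 := by
  rcases le_or_gt 0 n with hn | hn
  · exact hγ.whitenedAutocov_of_nonneg hn
  · rw [← whitenedAutocov_neg hγ.symm, hγ.whitenedAutocov_of_nonneg (by omega)]
    simp only [neg_eq_zero]

theorem toeplitz_mulVec_arInvColumn (hγ : IsYuleWalker p φ σ2 γ)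
    {m : ℕ} (hm : 2 * p + 1 ≤ m) (A : Matrix (Fin m) (Fin m) ℝ)
    (hA : ∀ i j : Fin m, A i j = γ |(i : ℤ) - (j : ℤ)|) :
    A *ᵥ (fun k => arInvColumn p φ k) = Pi.single ⟨p, by omega⟩ σ2 := by
  ext s
  have habs : ∀ x : ℤ, γ |x| = γ x := fun x => by
    rcases abs_choice x with h | h <;> rw [h]; exact hγ.symm x
  calc (A *ᵥ fun k => arInvColumn p φ k) s
      = ∑ i ∈ range (p + 1), arPolyCoeff p φ i *
          ∑ k : Fin m, arPolyCoeff p φ ((i + p : ℕ) - k) * γ (s - k) := by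
        simp only [mulVec, dotProduct, hA, habs, arInvColumn, mul_sum, sum_comm (γ := Fin m)]
        refine sum_congr rfl fun i _ => sum_congr rfl fun k _ => ?_
        push_cast; ring
    _ = whitenedAutocov p φ γ (s - p) := by
        refine sum_congr rfl fun i hi => ?_
        rw [sum_fin_arPolyCoeff_sub_mul (g := fun k => γ (s - k)) (by omega)
          (by rw [mem_range] at hi; omega), mul_sum]
        refine sum_congr rfl fun j _ => ?_
        push_cast; ring_nf
    _ = (Pi.single (⟨p, by omega⟩ : Fin m) σ2 : Fin m → ℝ) s := by
        rw [hγ.whitenedAutocov_eq, Pi.single_apply]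
        simp only [Fin.ext_iff, sub_eq_zero, Nat.cast_inj]

theorem mul_inv_apply_eq_arInvColumn (hγ : IsYuleWalker p φ σ2 γ)
    {m : ℕ} (hm : 2 * p + 1 ≤ m) (A : Matrix (Fin m) (Fin m) ℝ)
    (hA : ∀ i j : Fin m, A i j = γ |(i : ℤ) - (j : ℤ)|) (hA_det : IsUnit A.det) (k : Fin m) :
    σ2 * A⁻¹ k ⟨p, by omega⟩ = arInvColumn p φ k := by
  have h := congrArg (A⁻¹ *ᵥ ·) (hγ.toeplitz_mulVec_arInvColumn hm A hA)
  simp only [mulVec_mulVec, nonsing_inv_mul _ hA_det, one_mulVec, mulVec_single] at h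
  rw [mul_comm]
  exact (congrFun h k).symm

end IsYuleWalker

/-- Context: AR(p) coefficients `φ`, white-noise variance `σ2`, autocovariance
sequence `γ` satisfying the Yule–Walker equations, and the autocovariance
Toeplitz matrices `Γ m`, assumed positive definite for `m ≥ 1`. -/
theorem stmt_9
    (p : ℕ)
    (φ : ℕ → ℝ)
    (σ2 : ℝ)
    (γ : ℤ → ℝ)
    (hsym : ∀ j : ℤ, γ (-j) = γ j)
    (hYW0 : γ 0 = (∑ i ∈ Finset.Icc 1 p, φ i * γ (i : ℤ)) + σ2)
    (hYW : ∀ j : ℤ, 1 ≤ j → γ j = ∑ i ∈ Finset.Icc 1 p, φ i * γ (j - (i : ℤ)))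
    (Γ : (m : ℕ) → Matrix (Fin m) (Fin m) ℝ)
    (hΓ : ∀ m : ℕ, ∀ i j : Fin m, Γ m i j = γ |(i : ℤ) - (j : ℤ)|)
    (hpd : ∀ m : ℕ, 1 ≤ m → (Γ m).PosDef)
    (m : ℕ) (hm : 2 * p + 2 ≤ m) :
    (∀ (i : ℕ) (hi1 : 1 ≤ i) (hi2 : i ≤ m - p - 1),
      σ2 * (Γ m)⁻¹ ⟨p + i - 1, by omega⟩ ⟨p, by omega⟩
        = σ2 * (Γ (m - 1))⁻¹ ⟨p + i - 1, by omega⟩ ⟨p, by omega⟩) ∧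
    σ2 * (Γ m)⁻¹ ⟨m - 1, by omega⟩ ⟨p, by omega⟩ = 0 := by
  have hγ : IsYuleWalker p φ σ2 γ := ⟨hsym, hYW0, hYW⟩
  have hcol : ∀ n (hn : 2 * p + 1 ≤ n) (k : Fin n),
      σ2 * (Γ n)⁻¹ k ⟨p, by omega⟩ = arInvColumn p φ k := fun n hn =>
    hγ.mul_inv_apply_eq_arInvColumn hn (Γ n) (hΓ n) (hpd n (by omega)).det_pos.ne'.isUnit
  refine ⟨fun i _ _ => ?_, ?_⟩
  · rw [hcol m (by omega), hcol (m - 1) (by omega)]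
  · rw [hcol m (by omega)]
    exact arInvColumn_of_lt (by push_cast; omega)
end

section
/- Closed form for the diagonal of NLRC: for every integer m ≥ p+1 and every index 1 ≤ i ≤ m−p, NLRC_{p,m}(i,i) = Σ_{k=0}^{min(m−p−i, p)} φ_k², where φ₀ := −1. -/
/-!
Let `T` be the unit lower-triangular matrix whose first `p` rows are those of the identity and
whose row `c ≥ p` applies the AR filter, `(T x)_c = x_c - ∑_{k=1}^p φ_k x_{c-k}`. The Yule–Walker
equations say that `T Γ_m Tᵀ` is `σ² I` outside its top-left `p × p` block, so each column
`T e_a` with `a ≥ p` is an eigenvector of `T Γ_m Tᵀ` for the eigenvalue `σ²`. Since `T` is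
invertible this gives `Γ_m (TᵀT e_a) = σ² e_a`, hence `σ² (Γ_m⁻¹)_{aa} = ‖T e_a‖²`, and the
nonzero entries of column `a` of `T` are `-φ_k` for `k ≤ p` with `a + k < m`.
-/

open Matrix Finset

namespace Matrix

variable {n K : Type*} [Fintype n] [DecidableEq n] [Field K]

theorem mul_inv_apply_self_eq_col_dotProduct {A T : Matrix n n K} (hA : IsUnit A)
    (hT : IsUnit T) {s : K} {a : n} (h : (T * A * Tᵀ) *ᵥ T.col a = s • T.col a) :
    s * A⁻¹ a a = T.col a ⬝ᵥ T.col a := by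
  have hcol : T.col a = T *ᵥ Pi.single a 1 := (mulVec_single_one T a).symm
  have hA_col : A *ᵥ (Tᵀ *ᵥ T.col a) = s • Pi.single a 1 := by
    apply mulVec_injective_iff_isUnit.mpr hT
    rw [mulVec_mulVec, mulVec_mulVec, h, hcol, mulVec_smul]
  have hinv_col : Tᵀ *ᵥ T.col a = s • A⁻¹ *ᵥ Pi.single a 1 := by
    rw [← mulVec_smul, ← hA_col, mulVec_mulVec,
      nonsing_inv_mul _ ((isUnit_iff_isUnit_det A).mp hA), one_mulVec]
  have := congrFun hinv_col a
  simpa [mulVec, dotProduct, mul_comm] using this.symm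

end Matrix

theorem Fin.sum_ite_band_left {M : Type*} [AddCommMonoid M] {m p c : ℕ} (hpc : p ≤ c)
    (hcm : c < m) (G : ℕ → M) :
    ∑ a : Fin m, (if (a : ℕ) ≤ c ∧ c ≤ a + p then G a else 0)
      = ∑ k ∈ range (p + 1), G (c - k) := by
  rw [Fin.sum_univ_eq_sum_range (fun a => if a ≤ c ∧ c ≤ a + p then G a else 0), ← sum_filter]
  refine sum_nbij' (c - ·) (c - ·) ?_ ?_ ?_ ?_ ?_ <;>
    intro k hk <;> simp only [mem_filter, mem_range] at hk ⊢
  all_goals first | omega | (congr 1; omega)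

theorem Fin.sum_ite_band_right {M : Type*} [AddCommMonoid M] {m p a : ℕ} (ham : a < m)
    (F : ℕ → M) :
    ∑ c : Fin m, (if a ≤ (c : ℕ) ∧ (c : ℕ) ≤ a + p then F (c - a) else 0)
      = ∑ k ∈ range (min (m - 1 - a) p + 1), F k := by
  rw [Fin.sum_univ_eq_sum_range (fun c => if a ≤ c ∧ c ≤ a + p then F (c - a) else 0),
    ← sum_filter]
  refine sum_nbij' (· - a) (a + ·) ?_ ?_ ?_ ?_ ?_ <;>
    intro k hk <;> simp only [mem_filter, mem_range] at hk ⊢ <;> omega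

variable {R : Type*} [CommRing R]

def arWhitening (p : ℕ) (φ : ℕ → R) (m : ℕ) : Matrix (Fin m) (Fin m) R :=
  of fun c a => if (c : ℕ) < p then (if c = a then 1 else 0)
    else if (a : ℕ) ≤ c ∧ (c : ℕ) ≤ a + p then -φ (c - a) else 0

section arWhitening

variable {p : ℕ} {φ : ℕ → R} {m : ℕ}

theorem arWhitening_apply_of_le_row {c : Fin m} (hc : p ≤ (c : ℕ)) (a : Fin m) :
    arWhitening p φ m c a = if (a : ℕ) ≤ c ∧ (c : ℕ) ≤ a + p then -φ (c - a) else 0 := by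
  simp [arWhitening, not_lt.mpr hc]

theorem arWhitening_apply_of_le_col {a : Fin m} (ha : p ≤ (a : ℕ)) (c : Fin m) :
    arWhitening p φ m c a = if (a : ℕ) ≤ c ∧ (c : ℕ) ≤ a + p then -φ (c - a) else 0 := by
  by_cases hc : (c : ℕ) < p
  · have hca : c ≠ a := fun h => by omega
    simp [arWhitening, hc, hca, show ¬ (a : ℕ) ≤ c by omega]
  · exact arWhitening_apply_of_le_row (not_lt.mp hc) a

theorem arWhitening_apply_eq_zero_of_lt {c a : Fin m} (h : c < a) : arWhitening p φ m c a = 0 := by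
  simp [arWhitening, h.ne, not_le.mpr h]

theorem arWhitening_apply_self (hφ0 : φ 0 = -1) (c : Fin m) : arWhitening p φ m c c = 1 := by
  simp [arWhitening, hφ0]

theorem det_arWhitening (hφ0 : φ 0 = -1) : (arWhitening p φ m).det = 1 := by
  rw [det_of_isLowerTriangular _ fun c a h => arWhitening_apply_eq_zero_of_lt h]
  simp [arWhitening_apply_self hφ0]

structure YuleWalker (p : ℕ) (φ : ℕ → R) (σ2 : R) (γ : ℤ → R) : Prop where
  symm : ∀ j : ℤ, γ (-j) = γ j
  zero : γ 0 = (∑ i ∈ Icc 1 p, φ i * γ (i : ℤ)) + σ2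
  pos : ∀ j : ℤ, 1 ≤ j → γ j = ∑ i ∈ Icc 1 p, φ i * γ (j - (i : ℤ))

variable {σ2 : R} {γ : ℤ → R}

theorem YuleWalker.apply_abs (hYW : YuleWalker p φ σ2 γ) (x : ℤ) : γ |x| = γ x := by
  rcases abs_choice x with h | h <;> simp [h, hYW.symm]

theorem YuleWalker.sum_range_mul_apply_sub (hYW : YuleWalker p φ σ2 γ) (hφ0 : φ 0 = -1)
    {z : ℤ} (hz : 0 ≤ z) :
    ∑ k ∈ range (p + 1), φ k * γ (z - k) = if z = 0 then -σ2 else 0 := by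
  rw [Nat.range_succ_eq_Icc_zero, ← insert_Icc_add_one_left_eq_Icc (Nat.zero_le p), zero_add,
    sum_insert (by simp), hφ0]
  split_ifs with h0
  · subst h0
    simp only [zero_sub, hYW.symm, Nat.cast_zero, neg_zero]
    linear_combination -hYW.zero
  · simp only [Nat.cast_zero, sub_zero]
    linear_combination -hYW.pos z (by omega)

variable {A : Matrix (Fin m) (Fin m) R}

theorem YuleWalker.arWhitening_mul_apply_of_le (hYW : YuleWalker p φ σ2 γ) (hφ0 : φ 0 = -1)
    (hA : ∀ i j : Fin m, A i j = γ |(i : ℤ) - (j : ℤ)|)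
    {c j : Fin m} (hc : p ≤ (c : ℕ)) (hjc : j ≤ c) :
    (arWhitening p φ m * A) c j = if j = c then σ2 else 0 := by
  calc (arWhitening p φ m * A) c j
      = ∑ a : Fin m, (if (a : ℕ) ≤ c ∧ (c : ℕ) ≤ a + p then
          -(φ (c - a) * γ ((a : ℤ) - j)) else 0) := by
        simp only [mul_apply, arWhitening_apply_of_le_row hc, hA, hYW.apply_abs, ite_mul,
          zero_mul, neg_mul]
    _ = -∑ k ∈ range (p + 1), φ k * γ (((c : ℤ) - j) - k) := by
        rw [Fin.sum_ite_band_left hc c.isLt fun a => -(φ (c - a) * γ ((a : ℤ) - j)),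
          ← sum_neg_distrib]
        refine sum_congr rfl fun k hk => ?_
        have hk : k ≤ c := by simp at hk; omega
        rw [Nat.sub_sub_self hk, Nat.cast_sub hk]
        ring_nf
    _ = if j = c then σ2 else 0 := by
        rw [hYW.sum_range_mul_apply_sub hφ0 (by simpa using hjc)]
        simp only [sub_eq_zero, Nat.cast_inj, Fin.val_eq_val, eq_comm (a := j)]
        split_ifs <;> simp

theorem YuleWalker.arWhitening_congr_apply_of_le (hYW : YuleWalker p φ σ2 γ) (hφ0 : φ 0 = -1)
    (hA : ∀ i j : Fin m, A i j = γ |(i : ℤ) - (j : ℤ)|)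
    {c d : Fin m} (hc : p ≤ (c : ℕ)) (hdc : d ≤ c) :
    (arWhitening p φ m * A * (arWhitening p φ m)ᵀ) c d = if c = d then σ2 else 0 := by
  rw [mul_apply, Fintype.sum_eq_single c]
  · rw [transpose_apply, hYW.arWhitening_mul_apply_of_le hφ0 hA hc le_rfl, if_pos rfl]
    rcases hdc.lt_or_eq with h | rfl
    · simp [arWhitening_apply_eq_zero_of_lt h, h.ne']
    · simp [arWhitening_apply_self hφ0]
  · intro j hj
    rcases lt_or_gt_of_ne hj with h | h
    · rw [hYW.arWhitening_mul_apply_of_le hφ0 hA hc h.le, if_neg hj, zero_mul]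
    · rw [transpose_apply, arWhitening_apply_eq_zero_of_lt (hdc.trans_lt h), mul_zero]

theorem YuleWalker.arWhitening_congr_apply_of_le_col (hYW : YuleWalker p φ σ2 γ)
    (hφ0 : φ 0 = -1) (hA : ∀ i j : Fin m, A i j = γ |(i : ℤ) - (j : ℤ)|)
    {d : Fin m} (hd : p ≤ (d : ℕ)) (c : Fin m) :
    (arWhitening p φ m * A * (arWhitening p φ m)ᵀ) c d = if c = d then σ2 else 0 := by
  have hsymm : (arWhitening p φ m * A * (arWhitening p φ m)ᵀ).IsSymm := by
    have hAsymm : A.IsSymm := IsSymm.ext fun i j => by rw [hA, hA, abs_sub_comm]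
    simp [IsSymm, transpose_mul, hAsymm.eq, Matrix.mul_assoc]
  rcases le_total d c with hdc | hcd
  · exact hYW.arWhitening_congr_apply_of_le hφ0 hA (hd.trans hdc) hdc
  · rw [← hsymm.apply, hYW.arWhitening_congr_apply_of_le hφ0 hA hd hcd]
    simp only [eq_comm]

theorem YuleWalker.arWhitening_congr_mulVec_col (hYW : YuleWalker p φ σ2 γ) (hφ0 : φ 0 = -1)
    (hA : ∀ i j : Fin m, A i j = γ |(i : ℤ) - (j : ℤ)|) {a : Fin m} (ha : p ≤ (a : ℕ)) :
    (arWhitening p φ m * A * (arWhitening p φ m)ᵀ) *ᵥ (arWhitening p φ m).col a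
      = σ2 • (arWhitening p φ m).col a := by
  ext c
  have hterm : ∀ d, (arWhitening p φ m * A * (arWhitening p φ m)ᵀ) c d * arWhitening p φ m d a
      = (if c = d then σ2 else 0) * arWhitening p φ m d a := fun d => by
    rcases lt_or_ge d a with hda | had
    · simp [arWhitening_apply_eq_zero_of_lt hda]
    · rw [hYW.arWhitening_congr_apply_of_le_col hφ0 hA (ha.trans had)]
  simp [mulVec, dotProduct, hterm]

theorem col_arWhitening_dotProduct_self {a : Fin m} (ha : p ≤ (a : ℕ)) :
    (arWhitening p φ m).col a ⬝ᵥ (arWhitening p φ m).col a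
      = ∑ k ∈ range (min (m - 1 - a) p + 1), φ k ^ 2 := by
  rw [← Fin.sum_ite_band_right a.isLt]
  refine sum_congr rfl fun c _ => ?_
  simp only [col_apply, arWhitening_apply_of_le_col ha]
  split_ifs <;> ring

end arWhitening

/-- Context: AR(p) coefficients `φ`, white-noise variance `σ2`, autocovariance
sequence `γ` satisfying the Yule–Walker equations, and the autocovariance
Toeplitz matrices `Γ m`, assumed positive definite for `m ≥ 1`. -/
theorem stmt_10
    (p : ℕ)
    (φ : ℕ → ℝ) (hφ0 : φ 0 = -1)
    (σ2 : ℝ)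
    (γ : ℤ → ℝ)
    (hsym : ∀ j : ℤ, γ (-j) = γ j)
    (hYW0 : γ 0 = (∑ i ∈ Finset.Icc 1 p, φ i * γ (i : ℤ)) + σ2)
    (hYW : ∀ j : ℤ, 1 ≤ j → γ j = ∑ i ∈ Finset.Icc 1 p, φ i * γ (j - (i : ℤ)))
    (Γ : (m : ℕ) → Matrix (Fin m) (Fin m) ℝ)
    (hΓ : ∀ m : ℕ, ∀ i j : Fin m, Γ m i j = γ |(i : ℤ) - (j : ℤ)|)
    (hpd : ∀ m : ℕ, 1 ≤ m → (Γ m).PosDef)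
    (m : ℕ) (hm : p + 1 ≤ m) (i : ℕ) (hi1 : 1 ≤ i) (hi2 : i ≤ m - p) :
    σ2 * (Γ m)⁻¹ ⟨p + i - 1, by omega⟩ ⟨p + i - 1, by omega⟩
      = ∑ k ∈ Finset.range (min (m - p - i) p + 1), (φ k) ^ 2 := by
  have hAR : YuleWalker p φ σ2 γ := ⟨hsym, hYW0, hYW⟩
  have ha : p ≤ p + i - 1 := by omega
  have hT : IsUnit (arWhitening p φ m) := by
    rw [isUnit_iff_isUnit_det, det_arWhitening hφ0]
    exact isUnit_one
  rw [mul_inv_apply_self_eq_col_dotProduct (hpd m (by omega)).isUnit hT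
      (hAR.arWhitening_congr_mulVec_col hφ0 (hΓ m) ha),
    col_arWhitening_dotProduct_self ha]
  congr 3
  dsimp only
  omega
end

section
/- Closed form for the sub-diagonals of NLRC (Theorem: Closed Form for NLRC_{p,m}): for every integer m ≥ p+1, every offset 0 ≤ ℓ ≤ p, and every index ℓ+1 ≤ i ≤ m−p, NLRC_{p,m}(i, i−ℓ) = Σ_{k=0}^{min(m−p−i, p−ℓ)} φ_k · φ_{k+ℓ}, where φ₀ := −1. -/
open Matrix Finset

/-!
Let `A u s = φ (u - s)` for `s ≤ u ≤ s + p` (`arBand`), so that for `u ≥ p` row `u` of `A` sends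
`(X₀, …, X_{m-1})` to the innovation `-ε_u`. By the Yule–Walker equations the filtered sequence
`F z = ∑ φ d γ (z - d)` (`arFilter`) vanishes for `z ≥ 1` and equals `-σ²` at `0`, and filtering
`F` once more gives the white-noise autocovariance `σ² δ₀`. Hence for every column `c ≥ p`, which
only meets rows `u ≥ p`, the column `Aᵀ A e_c` (`arGram`) solves `Γ_m v = σ² e_c`; so `σ² Γ_m⁻¹`
agrees with `Aᵀ A` on these columns, and the entries of `Aᵀ A` are sums of products of `φ`'s.
-/

section ARFilter

variable (p : ℕ) (φ : ℕ → ℝ) (γ : ℤ → ℝ)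

def arFilter (z : ℤ) : ℝ :=
  ∑ d ∈ range (p + 1), φ d * γ (z - d)

variable {p φ γ}

lemma arFilter_eq (z : ℤ) :
    arFilter p φ γ z = φ 0 * γ z + ∑ i ∈ Icc 1 p, φ i * γ (z - i) := by
  rw [arFilter, range_eq_Ico, sum_eq_sum_Ico_succ_bot (Nat.succ_pos p), zero_add,
    Nat.succ_eq_add_one, Ico_add_one_right_eq_Icc, Nat.cast_zero, sub_zero]

lemma arFilter_eq_zero_of_pos (hφ0 : φ 0 = -1)
    (hYW : ∀ j : ℤ, 1 ≤ j → γ j = ∑ i ∈ Icc 1 p, φ i * γ (j - (i : ℤ)))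
    {z : ℤ} (hz : 0 < z) : arFilter p φ γ z = 0 := by
  rw [arFilter_eq, hφ0, ← hYW z hz]
  ring

lemma arFilter_zero (hφ0 : φ 0 = -1) {σ2 : ℝ} (hsym : ∀ j : ℤ, γ (-j) = γ j)
    (hYW0 : γ 0 = (∑ i ∈ Icc 1 p, φ i * γ (i : ℤ)) + σ2) :
    arFilter p φ γ 0 = -σ2 := by
  simp only [arFilter_eq, hφ0, zero_sub, hsym]
  linarith

lemma sum_mul_arFilter_sub (hφ0 : φ 0 = -1) {σ2 : ℝ} (hsym : ∀ j : ℤ, γ (-j) = γ j)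
    (hYW0 : γ 0 = (∑ i ∈ Icc 1 p, φ i * γ (i : ℤ)) + σ2)
    (hYW : ∀ j : ℤ, 1 ≤ j → γ j = ∑ i ∈ Icc 1 p, φ i * γ (j - (i : ℤ))) (j : ℤ) :
    ∑ k ∈ range (p + 1), φ k * arFilter p φ γ (k - j) = if j = 0 then σ2 else 0 := by
  rcases lt_trichotomy j 0 with hj | rfl | hj
  · rw [if_neg hj.ne]
    exact sum_eq_zero fun k _ => by
      rw [arFilter_eq_zero_of_pos hφ0 hYW (by omega), mul_zero]
  · rw [if_pos rfl, sum_range_succ', sum_eq_zero fun k _ => by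
      rw [arFilter_eq_zero_of_pos hφ0 hYW (by omega), mul_zero]]
    simp [arFilter_zero hφ0 hsym hYW0, hφ0]
  · rw [if_neg hj.ne']
    have hswap : ∑ k ∈ range (p + 1), φ k * arFilter p φ γ (k - j)
        = ∑ d ∈ range (p + 1), φ d * arFilter p φ γ (j + d) := by
      simp only [arFilter, mul_sum]
      rw [sum_comm]
      refine sum_congr rfl fun d _ => sum_congr rfl fun k _ => ?_
      rw [← hsym, show -((k : ℤ) - j - d) = j + d - k by ring]
      ring
    rw [hswap]
    exact sum_eq_zero fun d _ => by
      rw [arFilter_eq_zero_of_pos hφ0 hYW (by omega), mul_zero]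

end ARFilter

section ARBand

variable (p : ℕ) (φ : ℕ → ℝ)

def arBand (u s : ℕ) : ℝ :=
  if s ≤ u ∧ u ≤ s + p then φ (u - s) else 0

variable {p φ}

lemma arBand_eq_zero_of_lt {u s : ℕ} (h : u < s) : arBand p φ u s = 0 :=
  if_neg fun h' => h.not_ge h'.1

lemma arBand_add (s k : ℕ) : arBand p φ (s + k) s = if k ≤ p then φ k else 0 := by
  simp [arBand]

lemma sum_range_arBand_mul {m u : ℕ} (hu : u < m) (hpu : p ≤ u) (f : ℕ → ℝ) :
    ∑ s ∈ range m, arBand p φ u s * f s = ∑ d ∈ range (p + 1), φ d * f (u - d) := by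
  calc ∑ s ∈ range m, arBand p φ u s * f s
      = ∑ s ∈ range (u + 1), arBand p φ u s * f s :=
        eventually_constant_sum (fun s hs => by rw [arBand_eq_zero_of_lt hs, zero_mul]) hu
    _ = ∑ d ∈ range (u + 1), arBand p φ u (u - d) * f (u - d) :=
        (sum_range_reflect (fun s => arBand p φ u s * f s) (u + 1)).symm
    _ = ∑ d ∈ range (p + 1), arBand p φ u (u - d) * f (u - d) := by
        refine (sum_subset (range_subset_range.2 (by omega)) fun d hd hdp => ?_).symm
        simp only [mem_range] at hd hdp
        rw [arBand, if_neg (by omega), zero_mul]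
    _ = ∑ d ∈ range (p + 1), φ d * f (u - d) := by
        refine sum_congr rfl fun d hd => ?_
        rw [mem_range] at hd
        rw [arBand, if_pos (by omega), Nat.sub_sub_self (by omega)]

variable (p φ) in
def arGram (m c s : ℕ) : ℝ :=
  ∑ u ∈ range m, arBand p φ u c * arBand p φ u s

lemma arGram_add {m c ℓ : ℕ} (hr : c + ℓ < m) (hℓ : ℓ ≤ p) :
    arGram p φ m c (c + ℓ) = ∑ k ∈ range (min (m - (c + ℓ) - 1) (p - ℓ) + 1), φ k * φ (k + ℓ) := by
  set r := c + ℓ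
  obtain ⟨n, rfl⟩ := Nat.exists_eq_add_of_lt hr
  have hterm : ∀ k, arBand p φ (r + k) c * arBand p φ (r + k) r
      = if k < p - ℓ + 1 then φ k * φ (k + ℓ) else 0 := by
    intro k
    rw [arBand_add, show r + k = c + (k + ℓ) by omega, arBand_add]
    split_ifs <;> first | omega | ring
  calc arGram p φ (r + n + 1) c r
      = ∑ k ∈ range (n + 1), arBand p φ (r + k) c * arBand p φ (r + k) r := by
        rw [arGram, add_assoc, sum_range_add, sum_eq_zero fun u hu => by
          rw [arBand_eq_zero_of_lt (mem_range.1 hu), mul_zero], zero_add]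
    _ = ∑ k ∈ range (n + 1) with k < p - ℓ + 1, φ k * φ (k + ℓ) := by
        rw [sum_filter]
        exact sum_congr rfl fun k _ => hterm k
    _ = ∑ k ∈ range (min (r + n + 1 - r - 1) (p - ℓ) + 1), φ k * φ (k + ℓ) := by
        congr 1
        ext k
        simp only [mem_filter, mem_range]
        omega

lemma sum_range_mul_arGram (hφ0 : φ 0 = -1) {γ : ℤ → ℝ} {σ2 : ℝ}
    (hsym : ∀ j : ℤ, γ (-j) = γ j)
    (hYW0 : γ 0 = (∑ i ∈ Icc 1 p, φ i * γ (i : ℤ)) + σ2)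
    (hYW : ∀ j : ℤ, 1 ≤ j → γ j = ∑ i ∈ Icc 1 p, φ i * γ (j - (i : ℤ)))
    {m c x : ℕ} (hpc : p ≤ c) (hx : x < m) :
    ∑ s ∈ range m, γ ((x : ℤ) - s) * arGram p φ m c s = if x = c then σ2 else 0 := by
  calc ∑ s ∈ range m, γ ((x : ℤ) - s) * arGram p φ m c s
      = ∑ u ∈ range m, arBand p φ u c * ∑ s ∈ range m, arBand p φ u s * γ ((x : ℤ) - s) := by
        simp only [arGram, mul_sum]
        rw [sum_comm]
        exact sum_congr rfl fun u _ => sum_congr rfl fun s _ => by ring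
    _ = ∑ u ∈ range m, arBand p φ u c * arFilter p φ γ ((u : ℤ) - x) := by
        refine sum_congr rfl fun u hu => ?_
        rcases lt_or_ge u c with hcu | hcu
        · rw [arBand_eq_zero_of_lt hcu, zero_mul, zero_mul]
        rw [sum_range_arBand_mul (mem_range.1 hu) (hpc.trans hcu), arFilter]
        congr 1
        refine sum_congr rfl fun d hd => ?_
        rw [← hsym, Nat.cast_sub (by simp at hd; omega)]
        ring_nf
    _ = ∑ u ∈ range (c + (p + 1)), arBand p φ u c * arFilter p φ γ ((u : ℤ) - x) := by
        have hvanish : ∀ u ≥ min (x + 1) (c + (p + 1)),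
            arBand p φ u c * arFilter p φ γ ((u : ℤ) - x) = 0 := by
          intro u hu
          rcases le_or_gt (x + 1) u with hxu | hxu
          · rw [arFilter_eq_zero_of_pos hφ0 hYW (by omega), mul_zero]
          · rw [arBand, if_neg (by omega), zero_mul]
        rw [eventually_constant_sum hvanish (by omega : min (x + 1) (c + (p + 1)) ≤ m),
          eventually_constant_sum hvanish (min_le_right _ _)]
    _ = ∑ k ∈ range (p + 1), φ k * arFilter p φ γ (k - ((x : ℤ) - c)) := by
        rw [sum_range_add, sum_eq_zero fun u hu => by
          rw [arBand_eq_zero_of_lt (mem_range.1 hu), zero_mul], zero_add]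
        refine sum_congr rfl fun k hk => ?_
        rw [arBand_add, if_pos (by simp at hk; omega)]
        push_cast
        ring_nf
    _ = if x = c then σ2 else 0 := by
        simp only [sum_mul_arFilter_sub hφ0 hsym hYW0 hYW, sub_eq_zero, Nat.cast_inj]

end ARBand

lemma Matrix.mul_inv_apply_of_mulVec_eq_single {R n : Type*} [CommRing R] [Fintype n]
    [DecidableEq n] {M : Matrix n n R} (hM : IsUnit M.det) {w : n → R} {c : n} {a : R}
    (h : M *ᵥ w = Pi.single c a) (r : n) : a * M⁻¹ r c = w r := by
  have hw : w = M⁻¹ *ᵥ Pi.single c a := by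
    rw [← h, mulVec_mulVec, nonsing_inv_mul _ hM, one_mulVec]
  simp [hw]

/-- Context: AR(p) coefficients `φ`, white-noise variance `σ2`, autocovariance
sequence `γ` satisfying the Yule–Walker equations, and the autocovariance
Toeplitz matrices `Γ m`, assumed positive definite for `m ≥ 1`. -/
theorem stmt_11
    (p : ℕ)
    (φ : ℕ → ℝ) (hφ0 : φ 0 = -1)
    (σ2 : ℝ)
    (γ : ℤ → ℝ)
    (hsym : ∀ j : ℤ, γ (-j) = γ j)
    (hYW0 : γ 0 = (∑ i ∈ Finset.Icc 1 p, φ i * γ (i : ℤ)) + σ2)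
    (hYW : ∀ j : ℤ, 1 ≤ j → γ j = ∑ i ∈ Finset.Icc 1 p, φ i * γ (j - (i : ℤ)))
    (Γ : (m : ℕ) → Matrix (Fin m) (Fin m) ℝ)
    (hΓ : ∀ m : ℕ, ∀ i j : Fin m, Γ m i j = γ |(i : ℤ) - (j : ℤ)|)
    (hpd : ∀ m : ℕ, 1 ≤ m → (Γ m).PosDef)
    (m : ℕ) (hm : p + 1 ≤ m) (ℓ : ℕ) (hℓ : ℓ ≤ p)
    (i : ℕ) (hi1 : ℓ + 1 ≤ i) (hi2 : i ≤ m - p) :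
    σ2 * (Γ m)⁻¹ ⟨p + i - 1, by omega⟩ ⟨p + i - ℓ - 1, by omega⟩
      = ∑ k ∈ Finset.range (min (m - p - i) (p - ℓ) + 1), φ k * φ (k + ℓ) := by
  set c := p + i - ℓ - 1
  have hcol : Γ m *ᵥ (fun s : Fin m => arGram p φ m c s) = Pi.single ⟨c, by omega⟩ σ2 := by
    funext x
    have hsum := sum_range_mul_arGram hφ0 hsym hYW0 hYW (by omega : p ≤ c) x.isLt
    rw [← Fin.sum_univ_eq_sum_range (fun s => γ ((x : ℤ) - s) * arGram p φ m c s)] at hsum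
    simp only [mulVec, dotProduct, hΓ, Pi.single_apply, Fin.ext_iff, ← hsum]
    refine sum_congr rfl fun s _ => ?_
    rcases abs_choice ((x : ℤ) - s) with h | h <;> rw [h]
    rw [hsym]
  have hdet : IsUnit (Γ m).det := (isUnit_iff_isUnit_det _).1 (hpd m (by omega)).isUnit
  rw [Matrix.mul_inv_apply_of_mulVec_eq_single hdet hcol, show ((⟨p + i - 1, _⟩ : Fin m) : ℕ) = c + ℓ by simp only; omega, arGram_add (by omega) hℓ]
  congr 3
  omega
end

section
/- Recursion for the rolling average variance (Theorem: Asymptotic Distribution of Rolling Average, algebraic content): with s_{p,m} := (1/(m−p)²) · Σ_{i=1}^{m−p} Σ_{j=1}^{m−p} NLRC_{p,m}(i,j), one has s_{p,p+1} = 1, and for every integer m ≥ p+2, (m−p)² · s_{p,m} = (m−p−1)² · s_{p,m−1} + (φ₀ + φ₁ + ⋯ + φ_{min(m−p−1, p)})², where φ₀ := −1. -/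
open Matrix Finset

/-!
Let `A` be the lower unitriangular `m × m` matrix whose first `p` rows are those of the identity
and whose row `s ≥ p` maps `x` to the innovation `x_s - ∑_{k=1}^p φ_k x_{s-k}`. The Yule–Walker
equations say exactly that the columns `u ≥ p` of `A Γ_m Aᵀ` are those of `σ² I`, and from this
`σ² Γ_m⁻¹ = Aᵀ A` on the columns `j ≥ p`. Hence the sum of the entries of `NLRC_{p,m}` equals
`∑_t (∑_{j ≥ p} A_{tj})²`, and the row sums of `A` over the columns `j ≥ p` are
`-(φ₀ + ⋯ + φ_{min(t-p, p)})`. So `(m-p)² s_{p,m} = ∑_{d < m-p} (φ₀ + ⋯ + φ_{min(d, p)})²`,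
and both claims are read off this closed form.
-/

namespace Matrix

variable {n : Type*} [Fintype n]

theorem sum_sum_transpose_mul_self_apply_comp {ι R : Type*} [Fintype ι] [CommSemiring R]
    (A : Matrix n n R) (e : ι → n) :
    ∑ i, ∑ j, (Aᵀ * A) (e i) (e j) = ∑ t, (∑ i, A t (e i)) ^ 2 := by
  simp only [mul_apply, transpose_apply, sq, Finset.sum_mul_sum]
  conv_rhs => rw [Finset.sum_comm]
  exact sum_congr rfl fun _ _ => Finset.sum_comm

theorem IsLowerTriangular.mul_apply_eq_of_le [DecidableEq n] [LinearOrder n] {R : Type*}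
    [Semiring R] {A B : Matrix n n R} (hA : A.IsLowerTriangular) (hdiag : ∀ i, A i i = 1)
    {u : n} {c : R} (hB : ∀ v ≤ u, B v u = if v = u then c else 0) {t : n} (ht : t ≤ u) :
    (A * B) t u = if t = u then c else 0 := by
  rw [mul_apply, sum_eq_single u]
  · rcases ht.eq_or_lt with rfl | htu
    · simp [hdiag, hB]
    · simp [hA (show OrderDual.toDual u < OrderDual.toDual t from htu), htu.ne]
  · intro v _ hvu
    rcases le_or_gt v t with hvt | htv
    · rw [hB v (hvt.trans ht), if_neg hvu, mul_zero]
    · rw [hA (show OrderDual.toDual v < OrderDual.toDual t from htv), zero_mul]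
  · simp

/-- The hypothesis makes the column `A e_j` an eigenvector of `A Γ Aᵀ` for `c`; cancelling `A`
gives `Γ (Aᵀ A e_j) = c e_j`. -/
theorem mul_inv_apply_eq_transpose_mul_self_apply [DecidableEq n] {K : Type*} [Field K]
    {A Γ : Matrix n n K} (hA : IsUnit A) (hΓ : IsUnit Γ) {c : K} {j : n}
    (hD : ∀ u, A u j ≠ 0 → ∀ t, (A * Γ * Aᵀ) t u = if t = u then c else 0) (i : n) :
    c * Γ⁻¹ i j = (Aᵀ * A) i j := by
  have hcol : (A * Γ * Aᵀ) *ᵥ A.col j = c • A.col j := by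
    ext t
    have hterm : ∀ u, (A * Γ * Aᵀ) t u * A u j = if t = u then c * A u j else 0 := fun u => by
      by_cases h : A u j = 0
      · simp [h]
      · rw [hD u h t]
        split_ifs <;> ring
    simp only [mulVec, dotProduct, col_apply, Pi.smul_apply, smul_eq_mul, hterm,
      sum_ite_eq, mem_univ, if_true]
  have hΓcol : Γ *ᵥ (Aᵀ *ᵥ A.col j) = c • Pi.single j 1 := by
    apply mulVec_injective_iff_isUnit.2 hA
    rw [mulVec_mulVec, mulVec_mulVec, hcol, mulVec_smul, mulVec_single_one]
  have hinv : Γ⁻¹ * Γ = 1 := nonsing_inv_mul Γ ((isUnit_iff_isUnit_det Γ).1 hΓ)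
  have h := congrFun (congrArg (Γ⁻¹ *ᵥ ·) hΓcol) i
  rw [mulVec_mulVec, hinv, one_mulVec, ← mulVec_single_one, mulVec_mulVec, mulVec_single_one,
    mulVec_smul, mulVec_single_one] at h
  simpa using h.symm

end Matrix

theorem Finset.sum_range_ite_window {M : Type*} [AddCommMonoid M] (g : ℕ → ℕ → M)
    {p t N : ℕ} (ht : t < N) :
    ∑ v ∈ range N, (if v ≤ t ∧ t ≤ v + p then g (t - v) v else 0)
      = ∑ k ∈ range (min t p + 1), g k (t - k) := by
  rw [sum_ite, sum_const_zero, add_zero]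
  apply sum_nbij' (t - ·) (t - ·)
  all_goals intro v hv
  all_goals simp only [mem_filter, mem_range] at hv ⊢
  all_goals try omega
  rw [Nat.sub_sub_self hv.2.1]

structure IsYuleWalker_s14 (p : ℕ) (φ : ℕ → ℝ) (σ2 : ℝ) (γ : ℤ → ℝ) : Prop where
  symm : ∀ j : ℤ, γ (-j) = γ j
  eq_zero : γ 0 = (∑ i ∈ Icc 1 p, φ i * γ i) + σ2
  eq_pos : ∀ j : ℤ, 1 ≤ j → γ j = ∑ i ∈ Icc 1 p, φ i * γ (j - i)

namespace IsYuleWalker_s14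

variable {p : ℕ} {φ : ℕ → ℝ} {σ2 : ℝ} {γ : ℤ → ℝ}

theorem apply_abs (h : IsYuleWalker_s14 p φ σ2 γ) (x : ℤ) : γ |x| = γ x := by
  rcases abs_choice x with hx | hx <;> simp [hx, h.symm]

theorem sum_range_mul_add (h : IsYuleWalker_s14 p φ σ2 γ) (hφ0 : φ 0 = -1) {x : ℤ}
    (hx : x ≤ 0) :
    ∑ k ∈ range (p + 1), φ k * γ (x + k) = if x = 0 then -σ2 else 0 := by
  have hIcc : ∀ f : ℕ → ℝ, ∑ i ∈ Icc 1 p, f i = ∑ k ∈ range p, f (k + 1) := fun f => by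
    rw [range_eq_Ico, sum_Ico_add' f 0 p 1]; rfl
  rw [sum_range_succ', hφ0]
  rcases hx.eq_or_lt with rfl | hneg
  · simp only [Nat.cast_zero, add_zero, zero_add, if_true]
    rw [h.eq_zero, hIcc]
    push_cast
    ring
  · have := h.eq_pos (-x) (by omega)
    rw [hIcc] at this
    simp only [sub_eq_add_neg, ← neg_add, h.symm] at this
    rw [if_neg hneg.ne, Nat.cast_zero, add_zero, this]
    ring

end IsYuleWalker_s14

/-- With `φ 0 = -1`, row `s ≥ p` maps `x` to the innovation `x_s - ∑_{k=1}^p φ_k x_{s-k}`. -/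
def innovationCoeff (p : ℕ) (φ : ℕ → ℝ) (s t : ℕ) : ℝ :=
  if s < p then (if s = t then 1 else 0)
  else if t ≤ s ∧ s ≤ t + p then -φ (s - t) else 0

def innovationMatrix (p : ℕ) (φ : ℕ → ℝ) (m : ℕ) : Matrix (Fin m) (Fin m) ℝ :=
  of fun s t => innovationCoeff p φ s t

section innovationMatrix

variable {p : ℕ} {φ : ℕ → ℝ} {m s : ℕ}

theorem innovationMatrix_isLowerTriangular : (innovationMatrix p φ m).IsLowerTriangular := by
  intro s t hst
  change s < t at hst
  simp only [innovationMatrix, of_apply, innovationCoeff]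
  split_ifs <;> first | rfl | omega

theorem innovationMatrix_apply_self (hφ0 : φ 0 = -1) (s : Fin m) :
    innovationMatrix p φ m s s = 1 := by
  simp [innovationMatrix, innovationCoeff, hφ0]

theorem isUnit_innovationMatrix (hφ0 : φ 0 = -1) : IsUnit (innovationMatrix p φ m) := by
  rw [isUnit_iff_isUnit_det, det_of_isLowerTriangular _ innovationMatrix_isLowerTriangular]
  simp [innovationMatrix_apply_self hφ0]

theorem innovationCoeff_of_le (hs : p ≤ s) (t : ℕ) :
    innovationCoeff p φ s t = if t ≤ s ∧ s ≤ t + p then -φ (s - t) else 0 := by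
  rw [innovationCoeff, if_neg (by omega)]

theorem mul_transpose_innovationMatrix_apply {γ : ℤ → ℝ} {Γ : Matrix (Fin m) (Fin m) ℝ}
    (hΓ : ∀ i j : Fin m, Γ i j = γ ((i : ℤ) - j)) (v u : Fin m) (hu : p ≤ (u : ℕ)) :
    (Γ * (innovationMatrix p φ m)ᵀ) v u
      = -∑ k ∈ range (p + 1), φ k * γ ((v : ℤ) - u + k) := by
  simp only [mul_apply, transpose_apply, innovationMatrix, of_apply, hΓ,
    innovationCoeff_of_le hu]
  rw [Fin.sum_univ_eq_sum_range
    (fun w => γ ((v : ℤ) - w) * if w ≤ u ∧ u ≤ w + p then -φ (u - w) else 0)]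
  simp only [mul_ite, mul_zero]
  rw [sum_range_ite_window (fun k w => γ ((v : ℤ) - w) * -φ k) u.isLt, min_eq_right hu,
    ← sum_neg_distrib]
  refine sum_congr rfl fun k hk => ?_
  rw [Nat.cast_sub (by simp at hk; omega)]
  ring_nf

theorem sum_innovationMatrix_apply_add (s : Fin m) :
    ∑ i : Fin (m - p), innovationMatrix p φ m s ⟨p + i, Nat.add_lt_of_lt_sub' i.isLt⟩
      = if p ≤ (s : ℕ) then -∑ k ∈ range (min ((s : ℕ) - p) p + 1), φ k else 0 := by
  simp only [innovationMatrix, of_apply]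
  rw [Fin.sum_univ_eq_sum_range (fun i => innovationCoeff p φ s (p + i))]
  split_ifs with hs
  · have hwindow : ∀ i, innovationCoeff p φ s (p + i)
        = if i ≤ s - p ∧ s - p ≤ i + p then -φ (s - p - i) else 0 := fun i => by
      rw [innovationCoeff_of_le hs]
      congr 1
      · simp only [eq_iff_iff]; omega
      · congr 2; omega
    simp only [hwindow]
    rw [sum_range_ite_window (fun k _ => -φ k) (by omega), sum_neg_distrib]
  · refine sum_eq_zero fun i _ => ?_
    rw [innovationCoeff, if_pos (by omega), if_neg (by omega)]

end innovationMatrix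

namespace IsYuleWalker_s14

variable {p : ℕ} {φ : ℕ → ℝ} {σ2 : ℝ} {γ : ℤ → ℝ} {m : ℕ} {Γ : Matrix (Fin m) (Fin m) ℝ}

theorem mul_transpose_innovationMatrix_apply_of_le (h : IsYuleWalker_s14 p φ σ2 γ)
    (hφ0 : φ 0 = -1) (hΓ : ∀ i j : Fin m, Γ i j = γ ((i : ℤ) - j)) {v u : Fin m}
    (hu : p ≤ (u : ℕ)) (hvu : v ≤ u) :
    (Γ * (innovationMatrix p φ m)ᵀ) v u = if v = u then σ2 else 0 := by
  rw [mul_transpose_innovationMatrix_apply hΓ v u hu,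
    h.sum_range_mul_add hφ0 (by simp only [Fin.le_def] at hvu; omega)]
  simp only [sub_eq_zero, Nat.cast_inj, Fin.val_inj]
  split_ifs <;> simp

theorem innovationMatrix_mul_mul_transpose_apply (h : IsYuleWalker_s14 p φ σ2 γ)
    (hφ0 : φ 0 = -1) (hΓ : ∀ i j : Fin m, Γ i j = γ ((i : ℤ) - j)) (t : Fin m) {u : Fin m}
    (hu : p ≤ (u : ℕ)) :
    (innovationMatrix p φ m * Γ * (innovationMatrix p φ m)ᵀ) t u
      = if t = u then σ2 else 0 := by
  have hcol : ∀ {t u : Fin m}, p ≤ (u : ℕ) → t ≤ u →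
      (innovationMatrix p φ m * Γ * (innovationMatrix p φ m)ᵀ) t u
        = if t = u then σ2 else 0 := fun hu htu => by
    rw [Matrix.mul_assoc]
    exact innovationMatrix_isLowerTriangular.mul_apply_eq_of_le (innovationMatrix_apply_self hφ0)
      (fun v hvu => h.mul_transpose_innovationMatrix_apply_of_le hφ0 hΓ hu hvu) htu
  rcases le_or_gt t u with htu | hut
  · exact hcol hu htu
  · have hΓsymm : Γᵀ = Γ := by
      ext i j
      rw [transpose_apply, hΓ, hΓ, ← h.symm, neg_sub]
    have hsymm : (innovationMatrix p φ m * Γ * (innovationMatrix p φ m)ᵀ)ᵀ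
        = innovationMatrix p φ m * Γ * (innovationMatrix p φ m)ᵀ := by
      rw [transpose_mul, transpose_mul, transpose_transpose, hΓsymm, Matrix.mul_assoc]
    rw [← hsymm, transpose_apply, hcol (hu.trans hut.le) hut.le, if_neg hut.ne, if_neg hut.ne']

theorem mul_inv_apply_eq (h : IsYuleWalker_s14 p φ σ2 γ) (hφ0 : φ 0 = -1)
    (hΓ : ∀ i j : Fin m, Γ i j = γ ((i : ℤ) - j)) (hΓunit : IsUnit Γ) (i : Fin m) {j : Fin m}
    (hj : p ≤ (j : ℕ)) :
    σ2 * Γ⁻¹ i j = ((innovationMatrix p φ m)ᵀ * innovationMatrix p φ m) i j := by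
  refine mul_inv_apply_eq_transpose_mul_self_apply (isUnit_innovationMatrix hφ0) hΓunit
    (fun u hu t => h.innovationMatrix_mul_mul_transpose_apply hφ0 hΓ t ?_) i
  have hju : j ≤ u := not_lt.1 fun hlt => hu (innovationMatrix_isLowerTriangular hlt)
  exact hj.trans hju

theorem sum_sum_mul_inv_apply_add (h : IsYuleWalker_s14 p φ σ2 γ) (hφ0 : φ 0 = -1)
    (hΓ : ∀ i j : Fin m, Γ i j = γ ((i : ℤ) - j)) (hΓunit : IsUnit Γ) (hm : p ≤ m) :
    ∑ i : Fin (m - p), ∑ j : Fin (m - p),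
        σ2 * Γ⁻¹ ⟨p + i, Nat.add_lt_of_lt_sub' i.isLt⟩ ⟨p + j, Nat.add_lt_of_lt_sub' j.isLt⟩
      = ∑ d ∈ range (m - p), (∑ k ∈ range (min d p + 1), φ k) ^ 2 := by
  simp (disch := simp) only [h.mul_inv_apply_eq hφ0 hΓ hΓunit]
  rw [sum_sum_transpose_mul_self_apply_comp (innovationMatrix p φ m)
    (fun i : Fin (m - p) => ⟨p + i, Nat.add_lt_of_lt_sub' i.isLt⟩)]
  simp only [sum_innovationMatrix_apply_add, ite_pow, neg_sq]
  rw [Fin.sum_univ_eq_sum_range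
      (fun t => if p ≤ t then (∑ k ∈ range (min (t - p) p + 1), φ k) ^ 2 else (0 : ℝ) ^ 2),
    ← Nat.add_sub_cancel' hm, sum_range_add, Nat.add_sub_cancel_left]
  rw [sum_eq_zero fun x hx => by simp [not_le.2 (mem_range.1 hx)], zero_add]
  exact sum_congr rfl fun d _ => by simp

end IsYuleWalker_s14

/-- Context: AR(p) coefficients `φ`, white-noise variance `σ2`, autocovariance
sequence `γ` satisfying the Yule–Walker equations, and the autocovariance
Toeplitz matrices `Γ m`, assumed positive definite for `m ≥ 1`. -/
theorem stmt_14
    (p : ℕ)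
    (φ : ℕ → ℝ) (hφ0 : φ 0 = -1)
    (σ2 : ℝ)
    (γ : ℤ → ℝ)
    (hsym : ∀ j : ℤ, γ (-j) = γ j)
    (hYW0 : γ 0 = (∑ i ∈ Finset.Icc 1 p, φ i * γ (i : ℤ)) + σ2)
    (hYW : ∀ j : ℤ, 1 ≤ j → γ j = ∑ i ∈ Finset.Icc 1 p, φ i * γ (j - (i : ℤ)))
    (Γ : (m : ℕ) → Matrix (Fin m) (Fin m) ℝ)
    (hΓ : ∀ m : ℕ, ∀ i j : Fin m, Γ m i j = γ |(i : ℤ) - (j : ℤ)|)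
    (hpd : ∀ m : ℕ, 1 ≤ m → (Γ m).PosDef)
    :
    let s : ℕ → ℝ := fun m =>
      (1 / ((m - p : ℕ) : ℝ) ^ 2) * ∑ i : Fin (m - p), ∑ j : Fin (m - p),
        σ2 * (Γ m)⁻¹ ⟨p + i, by have := i.isLt; omega⟩ ⟨p + j, by have := j.isLt; omega⟩
    s (p + 1) = 1 ∧
    ∀ m : ℕ, p + 2 ≤ m →
      ((m - p : ℕ) : ℝ) ^ 2 * s m
        = ((m - p - 1 : ℕ) : ℝ) ^ 2 * s (m - 1)
          + (∑ k ∈ Finset.range (min (m - p - 1) p + 1), φ k) ^ 2 := by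
  intro s
  have hAR : IsYuleWalker_s14 p φ σ2 γ := ⟨hsym, hYW0, hYW⟩
  have hscaled : ∀ m, p + 1 ≤ m →
      ((m - p : ℕ) : ℝ) ^ 2 * s m
        = ∑ d ∈ range (m - p), (∑ k ∈ range (min d p + 1), φ k) ^ 2 := by
    intro m hm
    have hΓm : ∀ i j : Fin m, Γ m i j = γ ((i : ℤ) - j) := fun i j => by rw [hΓ, hAR.apply_abs]
    have hmp : ((m - p : ℕ) : ℝ) ≠ 0 := by norm_cast; omega
    rw [← hAR.sum_sum_mul_inv_apply_add hφ0 hΓm (hpd m (by omega)).isUnit (by omega)]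
    simp only [s]
    field_simp
  refine ⟨?_, fun m hm => ?_⟩
  · simpa [hφ0] using hscaled (p + 1) le_rfl
  · rw [hscaled m (by omega), Nat.sub_right_comm, hscaled (m - 1) (by omega),
      show m - p = m - 1 - p + 1 by omega, sum_range_succ]
end
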